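/- arXiv:1803.01371 — 4 statements merged into one kernel-verified Lean document; each statement's English description precedes it below -/
import Mathlib

section
/- Generalized coarea formula: for any locally integrable u on ℝⁿ, an open set Ω and r > 0, one has ∫_Ω osc_{B_r(x)} u dx = ∫_{−∞}^{+∞} L^n(((∂{u > s}) ⊕ B_r) ∩ Ω) ds, where L^n is Lebesgue measure. -/
open MeasureTheory Metric Set Filter
open scoped ENNReal Topology

/-- Convert an extended real to an extended nonnegative real. -/
noncomputable def erealToENNReal (x : EReal) : ℝ≥0∞ :=
  if x = ⊤ then ⊤ else ENNReal.ofReal x.toReal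

/-- Essential oscillation of `u` on a set `s` (possibly `+∞`). -/
noncomputable def osc {n : ℕ} (u : EuclideanSpace ℝ (Fin n) → ℝ)
    (s : Set (EuclideanSpace ℝ (Fin n))) : ℝ≥0∞ :=
  erealToENNReal ((essSup (fun x => (u x : EReal)) (volume.restrict s)) -
    (essInf (fun x => (u x : EReal)) (volume.restrict s)))

/-- Points of density one of a measurable set. -/
def densityOne {n : ℕ} (E : Set (EuclideanSpace ℝ (Fin n))) : Set (EuclideanSpace ℝ (Fin n)) :=
  {x | Tendsto (fun ρ => volume (E ∩ ball x ρ) / volume (ball x ρ))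
    (nhdsWithin 0 (Ioi 0)) (nhds 1)}

/-- Minkowski dilation `A ⊕ B_r`. -/
def dilate {n : ℕ} (A : Set (EuclideanSpace ℝ (Fin n))) (r : ℝ) :
    Set (EuclideanSpace ℝ (Fin n)) :=
  ⋃ x ∈ A, ball x r

/-!
Write `m x` and `M x` for the essential infimum and supremum of `u` on `B_r(x)`. By Lebesgue's
density theorem the density-one set of `E = {u > s}` agrees with `E` almost everywhere, and a ball
meets the frontier of that set exactly when both `E` and its complement have positive measure in
the ball (the ball is connected). So `x` lies in the `r`-dilation of the frontier whenever `m x < s < M x`, and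
only if `m x ≤ s < M x`. The functions `m` and `M` are Borel, because the set of centres of balls in
which a fixed set has positive measure is open; hence for almost every `s` the level set `{m = s}`
is null, and Tonelli turns `∫ |{m < s < M} ∩ Ω| ds` into `∫_Ω (M - m) = ∫_Ω osc`.
-/

-- No `a ≤ b` is needed: otherwise `b - a` is negative or `⊥`, which `erealToENNReal` sends to `0`.
theorem volume_setOf_coe_mem_Ioo (a b : EReal) :
    volume {s : ℝ | a < s ∧ (s : EReal) < b} = erealToENNReal (b - a) := by
  induction a using EReal.rec <;> induction b using EReal.rec <;>
    simp [erealToENNReal, ← EReal.coe_sub, Iio_def, Ioi_def, Ioo_def]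

section EssSup

variable {α β : Type*} [MeasurableSpace α] {μ : Measure α} [CompleteLinearOrder β]
  [TopologicalSpace β] [FirstCountableTopology β] [OrderTopology β] {f : α → β} {c : β}

theorem lt_essSup_iff_measure_ne_zero : c < essSup f μ ↔ μ {y | c < f y} ≠ 0 := by
  refine ⟨fun h h0 => h.not_ge (essSup_le_of_ae_le c ?_), fun h => ?_⟩
  · simpa [EventuallyLE, ae_iff] using h0
  · by_contra! hle
    exact h (measure_mono_null (fun y hy => (hle.trans_lt hy)) meas_essSup_lt)

theorem essInf_lt_iff_measure_ne_zero : essInf f μ < c ↔ μ {y | f y < c} ≠ 0 :=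
  lt_essSup_iff_measure_ne_zero (β := βᵒᵈ)

end EssSup

section Balls

variable {α β : Type*} [PseudoMetricSpace α] [MeasurableSpace α]

theorem isOpen_setOf_measure_inter_ball_ne_zero (μ : Measure α) (S : Set α) (r : ℝ) :
    IsOpen {x | μ (S ∩ ball x r) ≠ 0} := by
  refine isOpen_iff.2 fun x hx => ?_
  obtain ⟨k, hk⟩ : ∃ k : ℕ, μ (S ∩ ball x (r - 1 / (k + 1))) ≠ 0 := by
    by_contra! h
    refine hx (measure_mono_null (fun y ⟨hyS, hy⟩ => ?_) (measure_iUnion_null h))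
    obtain ⟨k, hk⟩ := exists_nat_one_div_lt (sub_pos.2 (mem_ball.1 hy))
    exact mem_iUnion.2 ⟨k, hyS, mem_ball.2 (by linarith)⟩
  refine ⟨1 / (k + 1), by positivity, fun x' hx' => ?_⟩
  refine fun h0 => hk (measure_mono_null (inter_subset_inter_right _ (ball_subset_ball' ?_)) h0)
  rw [mem_ball] at hx'
  linarith [dist_comm x x']

variable [OpensMeasurableSpace α] [CompleteLinearOrder β] [TopologicalSpace β] [OrderTopology β]
  [SecondCountableTopology β] [MeasurableSpace β] [BorelSpace β]

theorem measurable_essSup_restrict_ball (μ : Measure α) (f : α → β) (r : ℝ) :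
    Measurable fun x => essSup f (μ.restrict (ball x r)) := by
  refine measurable_of_Ioi fun c => IsOpen.measurableSet ?_
  simp only [preimage, mem_Ioi, lt_essSup_iff_measure_ne_zero,
    Measure.restrict_apply' measurableSet_ball]
  exact isOpen_setOf_measure_inter_ball_ne_zero μ _ r

theorem measurable_essInf_restrict_ball (μ : Measure α) (f : α → β) (r : ℝ) :
    Measurable fun x => essInf f (μ.restrict (ball x r)) := by
  refine measurable_of_Iio fun c => IsOpen.measurableSet ?_
  simp only [preimage, mem_Iio, essInf_lt_iff_measure_ne_zero,
    Measure.restrict_apply' measurableSet_ball]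
  exact isOpen_setOf_measure_inter_ball_ne_zero μ _ r

end Balls

section Layers

variable {α : Type*} [MeasurableSpace α] {μ : Measure α} [SFinite μ] {f g : α → EReal}

theorem ae_measure_setOf_eq_coe_eq_zero (hf : Measurable f) : ∀ᵐ s : ℝ, μ {x | f x = s} = 0 := by
  have hcount := (Measure.countable_meas_level_set_pos (μ := μ) hf).preimage EReal.coe_injective
  simpa [ae_iff, pos_iff_ne_zero] using hcount.measure_zero volume

theorem lintegral_measure_setOf_lt_lt (hf : Measurable f) (hg : Measurable g) :
    ∫⁻ s : ℝ, μ {x | f x < s ∧ (s : EReal) < g x} = ∫⁻ x, erealToENNReal (g x - f x) ∂μ := by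
  have hG : MeasurableSet {p : ℝ × α | f p.2 < p.1 ∧ (p.1 : EReal) < g p.2} := by
    have hs : Measurable fun p : ℝ × α => (p.1 : EReal) :=
      measurable_coe_real_ereal.comp measurable_fst
    exact (measurableSet_lt (hf.comp measurable_snd) hs).inter
      (measurableSet_lt hs (hg.comp measurable_snd))
  calc ∫⁻ s : ℝ, μ {x | f x < s ∧ (s : EReal) < g x}
      = (volume.prod μ) {p : ℝ × α | f p.2 < p.1 ∧ (p.1 : EReal) < g p.2} :=
        (Measure.prod_apply hG).symm
    _ = ∫⁻ x, volume {s : ℝ | f x < s ∧ (s : EReal) < g x} ∂μ := Measure.prod_apply_symm hG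
    _ = ∫⁻ x, erealToENNReal (g x - f x) ∂μ := by simp_rw [volume_setOf_coe_mem_Ioo]

end Layers

theorem IsPreconnected.inter_frontier_nonempty {α : Type*} [TopologicalSpace α] {s t : Set α}
    (hs : IsPreconnected s) (hst : (s ∩ t).Nonempty) (hst' : (s \ t).Nonempty) :
    (s ∩ frontier t).Nonempty := by
  by_contra h
  have hcover : ∀ x ∈ s, x ∈ interior t ∨ x ∈ (closure t)ᶜ := fun x hx => by
    by_cases hx' : x ∈ closure t
    · exact .inl (by_contra fun hi => h ⟨x, hx, hx', hi⟩)
    · exact .inr hx'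
  obtain ⟨p, hps, hpt⟩ := hst
  obtain ⟨q, hqs, hqt⟩ := hst'
  obtain ⟨x, -, hx_int, hx_ext⟩ := hs _ _ isOpen_interior isClosed_closure.isOpen_compl hcover
    ⟨p, hps, (hcover p hps).resolve_right (not_not.2 (subset_closure hpt))⟩
    ⟨q, hqs, (hcover q hqs).resolve_left fun hq => hqt (interior_subset hq)⟩
  exact hx_ext (interior_subset_closure hx_int)

theorem ball_ae_eq_closedBall {E : Type*} [NormedAddCommGroup E] [NormedSpace ℝ E]
    [MeasurableSpace E] [BorelSpace E] [FiniteDimensional ℝ E] (μ : Measure E)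
    [μ.IsAddHaarMeasure] (x : E) {ρ : ℝ} (hρ : ρ ≠ 0) : ball x ρ =ᵐ[μ] closedBall x ρ :=
  ball_subset_closedBall.eventuallyLE.antisymm <| ae_le_set.2 <| by
    rw [closedBall_sdiff_ball]; exact Measure.addHaar_sphere_of_ne_zero μ x hρ

section Density

variable {n : ℕ}

local notation "ℝⁿ" => EuclideanSpace ℝ (Fin n)

theorem mem_dilate_iff {A : Set ℝⁿ} {r : ℝ} {x : ℝⁿ} :
    x ∈ dilate A r ↔ (ball x r ∩ A).Nonempty := by
  simp [dilate, dist_comm, and_comm, Set.Nonempty]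

theorem densityOne_congr {E F : Set ℝⁿ} (h : E =ᵐ[volume] F) : densityOne E = densityOne F := by
  simp only [densityOne, measure_congr (h.inter (EventuallyEq.refl _ (ball _ _)))]

theorem densityOne_ae_eq {E : Set ℝⁿ} (hE : NullMeasurableSet E volume) :
    densityOne E =ᵐ[volume] E := by
  rw [← densityOne_congr hE.toMeasurable_ae_eq]
  refine EventuallyEq.trans ?_ hE.toMeasurable_ae_eq
  filter_upwards [Besicovitch.ae_tendsto_measure_inter_div_of_measurableSet volume
    (measurableSet_toMeasurable volume E)] with x hx
  set F := toMeasurable volume E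
  have hball : Tendsto (fun ρ => volume (F ∩ ball x ρ) / volume (ball x ρ)) (𝓝[>] 0)
      (𝓝 (F.indicator 1 x)) := by
    refine hx.congr' (eventually_nhdsWithin_of_forall fun ρ (hρ : 0 < ρ) => ?_)
    have h := ball_ae_eq_closedBall volume x hρ.ne'
    dsimp only
    rw [measure_congr h, measure_congr ((EventuallyEq.refl _ F).inter h)]
  refine propext ⟨fun hxD => by_contra fun hxF => ?_, fun hxF => ?_⟩
  · rw [indicator_of_notMem hxF] at hball
    exact zero_ne_one (tendsto_nhds_unique hball hxD)
  · rw [indicator_of_mem hxF, Pi.one_apply] at hball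
    exact hball

theorem disjoint_densityOne_of_measure_inter_eq_zero {U E : Set ℝⁿ} (hU : IsOpen U)
    (h : volume (E ∩ U) = 0) : Disjoint U (densityOne E) := by
  refine disjoint_left.2 fun x hx hxE => zero_ne_one (tendsto_nhds_unique ?_ hxE)
  refine tendsto_const_nhds.congr' ?_
  filter_upwards [nhdsWithin_le_nhds (eventually_ball_subset (hU.mem_nhds hx))] with ρ hρ
  rw [measure_mono_null (inter_subset_inter_right _ hρ) h, ENNReal.zero_div]

theorem subset_densityOne_of_measure_diff_eq_zero {U E : Set ℝⁿ} (hU : IsOpen U)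
    (h : volume (U \ E) = 0) : U ⊆ densityOne E := by
  refine fun x hx => tendsto_const_nhds.congr' ?_
  filter_upwards [self_mem_nhdsWithin, nhdsWithin_le_nhds (eventually_ball_subset (hU.mem_nhds hx))]
    with ρ (hρ₀ : 0 < ρ) hρ
  rw [inter_comm, measure_inter_conull' (measure_mono_null (sdiff_subset_sdiff_left hρ) h),
    ENNReal.div_self (measure_ball_pos volume x hρ₀).ne' measure_ball_lt_top.ne]

theorem measure_ne_zero_of_mem_dilate_frontier_densityOne {E : Set ℝⁿ} {r : ℝ} {x : ℝⁿ}
    (hx : x ∈ dilate (frontier (densityOne E)) r) :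
    volume (E ∩ ball x r) ≠ 0 ∧ volume (ball x r \ E) ≠ 0 := by
  obtain ⟨y, hy, hyD⟩ := mem_dilate_iff.1 hx
  constructor
  · intro h
    have hdisj := (disjoint_densityOne_of_measure_inter_eq_zero isOpen_ball h).closure_right
      isOpen_ball
    exact hdisj.notMem_of_mem_left hy (frontier_subset_closure hyD)
  · intro h
    have hsub := interior_maximal (subset_densityOne_of_measure_diff_eq_zero isOpen_ball h)
      isOpen_ball
    exact hyD.2 (hsub hy)

theorem mem_dilate_frontier_densityOne_of_measure_ne_zero {E : Set ℝⁿ}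
    (hE : NullMeasurableSet E volume) {r : ℝ} {x : ℝⁿ} (hin : volume (E ∩ ball x r) ≠ 0)
    (hout : volume (ball x r \ E) ≠ 0) : x ∈ dilate (frontier (densityOne E)) r := by
  have hD := densityOne_ae_eq hE
  rw [← measure_congr (hD.inter (EventuallyEq.refl _ (ball x r))), inter_comm] at hin
  rw [← measure_congr ((EventuallyEq.refl _ (ball x r)).diff hD)] at hout
  exact mem_dilate_iff.2 <| (convex_ball x r).isPreconnected.inter_frontier_nonempty
    (nonempty_of_measure_ne_zero hin) (nonempty_of_measure_ne_zero hout)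

noncomputable def essSupBall (u : ℝⁿ → ℝ) (r : ℝ) (x : ℝⁿ) : EReal :=
  essSup (fun y => (u y : EReal)) (volume.restrict (ball x r))

noncomputable def essInfBall (u : ℝⁿ → ℝ) (r : ℝ) (x : ℝⁿ) : EReal :=
  essInf (fun y => (u y : EReal)) (volume.restrict (ball x r))

variable {u : EuclideanSpace ℝ (Fin n) → ℝ} {r : ℝ} {x : EuclideanSpace ℝ (Fin n)} {s : ℝ}

theorem lt_essSupBall_iff :
    (s : EReal) < essSupBall u r x ↔ volume ({y | u y > s} ∩ ball x r) ≠ 0 := by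
  rw [essSupBall, lt_essSup_iff_measure_ne_zero, Measure.restrict_apply' measurableSet_ball]
  simp only [EReal.coe_lt_coe_iff, gt_iff_lt]

theorem measure_ball_diff_ne_zero_of_essInfBall_lt (h : essInfBall u r x < s) :
    volume (ball x r \ {y | u y > s}) ≠ 0 := by
  rw [essInfBall, essInf_lt_iff_measure_ne_zero, Measure.restrict_apply' measurableSet_ball] at h
  refine fun h0 => h (measure_mono_null ?_ h0)
  rintro y ⟨hy, hyb⟩
  exact ⟨hyb, fun hgt => (EReal.coe_lt_coe_iff.1 hy).not_gt hgt⟩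

theorem essInfBall_le_of_measure_ball_diff_ne_zero (h : volume (ball x r \ {y | u y > s}) ≠ 0) :
    essInfBall u r x ≤ s := by
  by_contra! hlt
  have := ae_lt_of_lt_essInf hlt
  rw [ae_iff, Measure.restrict_apply' measurableSet_ball] at this
  refine h (measure_mono_null ?_ this)
  rintro y ⟨hyb, hy⟩
  exact ⟨by simpa using hy, hyb⟩

theorem setOf_essInfBall_lt_lt_essSupBall_subset_dilate (hu : AEMeasurable u volume) :
    {x | essInfBall u r x < s ∧ s < essSupBall u r x} ⊆
      dilate (frontier (densityOne {y | u y > s})) r := fun _ ⟨hinf, hsup⟩ =>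
  mem_dilate_frontier_densityOne_of_measure_ne_zero (nullMeasurableSet_lt aemeasurable_const hu)
    (lt_essSupBall_iff.1 hsup) (measure_ball_diff_ne_zero_of_essInfBall_lt hinf)

theorem dilate_subset_setOf_essInfBall_le_lt_essSupBall :
    dilate (frontier (densityOne {y | u y > s})) r ⊆
      {x | essInfBall u r x < s ∧ s < essSupBall u r x} ∪ {x | essInfBall u r x = s} := by
  intro x hx
  obtain ⟨hin, hout⟩ := measure_ne_zero_of_mem_dilate_frontier_densityOne hx
  rcases (essInfBall_le_of_measure_ball_diff_ne_zero hout).lt_or_eq with hlt | heq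
  exacts [.inl ⟨hlt, lt_essSupBall_iff.2 hin⟩, .inr heq]

theorem measure_dilate_frontier_densityOne_eq {μ : Measure ℝⁿ} (hu : AEMeasurable u volume)
    (hs : μ {x | essInfBall u r x = s} = 0) :
    μ (dilate (frontier (densityOne {y | u y > s})) r) =
      μ {x | essInfBall u r x < s ∧ s < essSupBall u r x} :=
  le_antisymm
    ((measure_mono dilate_subset_setOf_essInfBall_le_lt_essSupBall).trans
      ((measure_union_le _ _).trans (by rw [hs, add_zero])))
    (measure_mono (setOf_essInfBall_lt_lt_essSupBall_subset_dilate hu))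

end Density

theorem coarea_osc_general {n : ℕ} (u : EuclideanSpace ℝ (Fin n) → ℝ) (hu : LocallyIntegrable u)
    (Ω : Set (EuclideanSpace ℝ (Fin n))) (hΩ : IsOpen Ω) (r : ℝ) :
    ∫⁻ x in Ω, osc u (ball x r) =
      ∫⁻ s : ℝ, volume ((dilate (frontier (densityOne {y | u y > s})) r) ∩ Ω) := by
  have hinf : Measurable (essInfBall u r) := measurable_essInf_restrict_ball volume _ r
  have hsup : Measurable (essSupBall u r) := measurable_essSup_restrict_ball volume _ r
  calc ∫⁻ x in Ω, osc u (ball x r)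
      = ∫⁻ x in Ω, erealToENNReal (essSupBall u r x - essInfBall u r x) := rfl
    _ = ∫⁻ s : ℝ, volume.restrict Ω {x | essInfBall u r x < s ∧ s < essSupBall u r x} :=
      (lintegral_measure_setOf_lt_lt (μ := volume.restrict Ω) hinf hsup).symm
    _ = ∫⁻ s : ℝ, volume.restrict Ω (dilate (frontier (densityOne {y | u y > s})) r) := by
      refine lintegral_congr_ae ?_
      filter_upwards [ae_measure_setOf_eq_coe_eq_zero (μ := volume.restrict Ω) hinf] with s hs
      exact (measure_dilate_frontier_densityOne_eq hu.aestronglyMeasurable.aemeasurable hs).symm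
    _ = ∫⁻ s : ℝ, volume ((dilate (frontier (densityOne {y | u y > s})) r) ∩ Ω) := by
      simp_rw [Measure.restrict_apply' hΩ.measurableSet]

/-- generalized coarea formula. -/
theorem coarea_osc {n : ℕ} (u : EuclideanSpace ℝ (Fin n) → ℝ) (hu : LocallyIntegrable u)
    (Ω : Set (EuclideanSpace ℝ (Fin n))) (hΩ : IsOpen Ω) (r : ℝ) (hr : 0 < r) :
    ∫⁻ x in Ω, osc u (ball x r) =
      ∫⁻ s : ℝ, volume ((dilate (frontier (densityOne {y | u y > s})) r) ∩ Ω) :=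
  coarea_osc_general u hu Ω hΩ r
end

section
/- For a measurable set E ⊆ ℝⁿ, an open set Ω and r > 0, the oscillation of the characteristic function of E satisfies ∫_Ω osc_{B_r(x)} χ_E dx = L^n(((∂E) ⊕ B_r) ∩ Ω), where ∂E is the boundary of the set of density-one points of E. -/
open MeasureTheory Metric Set Filter
open scoped ENNReal Topology

section Helpers

variable {n : ℕ}

lemma inter_closedBall_vol (S : Set (EuclideanSpace ℝ (Fin n))) (x : EuclideanSpace ℝ (Fin n))
    {ρ : ℝ} (hρ : 0 < ρ) : volume (S ∩ closedBall x ρ) = volume (S ∩ ball x ρ) := by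
  refine le_antisymm ?_ (measure_mono (inter_subset_inter_right _ ball_subset_closedBall))
  calc volume (S ∩ closedBall x ρ) ≤ volume ((S ∩ ball x ρ) ∪ sphere x ρ) := by
        refine measure_mono fun y hy => ?_
        rcases eq_or_lt_of_le (mem_closedBall.1 hy.2) with h | h
        · exact Or.inr h
        · exact Or.inl ⟨hy.1, h⟩
    _ ≤ volume (S ∩ ball x ρ) + volume (sphere x ρ) := measure_union_le _ _
    _ = volume (S ∩ ball x ρ) := by
        rw [Measure.addHaar_sphere_of_ne_zero volume x hρ.ne', add_zero]

lemma mem_densityOne_iff_closedBall {E : Set (EuclideanSpace ℝ (Fin n))}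
    {x : EuclideanSpace ℝ (Fin n)} :
    x ∈ densityOne E ↔ Tendsto (fun ρ => volume (E ∩ closedBall x ρ) / volume (closedBall x ρ))
      (𝓝[>] 0) (𝓝 1) := by
  have h : ∀ᶠ ρ in 𝓝[>] (0:ℝ),
      volume (E ∩ closedBall x ρ) / volume (closedBall x ρ)
        = volume (E ∩ ball x ρ) / volume (ball x ρ) := by
    filter_upwards [self_mem_nhdsWithin] with ρ (hρ : 0 < ρ)
    have hb : volume (closedBall x ρ) = volume (ball x ρ) := by
      simpa using inter_closedBall_vol univ x hρ
    rw [inter_closedBall_vol E x hρ, hb]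
  exact ⟨fun hx => hx.congr' (h.mono fun ρ hρ => hρ.symm), fun hx => hx.congr' h⟩

lemma null_diff_densityOne {E : Set (EuclideanSpace ℝ (Fin n))} (hE : MeasurableSet E) :
    volume (E \ densityOne E) = 0 ∧ volume (densityOne E \ E) = 0 := by
  have h1 := Besicovitch.ae_tendsto_measure_inter_div_of_measurableSet volume hE
  have h2 := Besicovitch.ae_tendsto_measure_inter_div_of_measurableSet volume hE.compl
  have key : ∀ᵐ x, (x ∈ E → x ∈ densityOne E) ∧ (x ∉ E → x ∉ densityOne E) := by
    filter_upwards [h1, h2] with x hx1 hx2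
    constructor
    · intro hxE
      rw [mem_densityOne_iff_closedBall]
      simpa [indicator_of_mem hxE] using hx1
    · intro hxE hxD
      have hx2' : Tendsto (fun ρ => volume (Eᶜ ∩ closedBall x ρ) / volume (closedBall x ρ))
          (𝓝[>] 0) (𝓝 1) := by simpa [indicator_of_mem (mem_compl hxE)] using hx2
      have hxD' := mem_densityOne_iff_closedBall.1 hxD
      have hsum : Tendsto (fun ρ => volume (E ∩ closedBall x ρ) / volume (closedBall x ρ)
          + volume (Eᶜ ∩ closedBall x ρ) / volume (closedBall x ρ)) (𝓝[>] 0) (𝓝 2) := by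
        simpa [one_add_one_eq_two] using hxD'.add hx2'
      have heq : ∀ᶠ ρ in 𝓝[>] (0:ℝ),
          volume (E ∩ closedBall x ρ) / volume (closedBall x ρ)
          + volume (Eᶜ ∩ closedBall x ρ) / volume (closedBall x ρ) = 1 := by
        filter_upwards [self_mem_nhdsWithin] with ρ (hρ : 0 < ρ)
        rw [← ENNReal.add_div]
        have : volume (E ∩ closedBall x ρ) + volume (Eᶜ ∩ closedBall x ρ)
            = volume (closedBall x ρ) := by
          have h0 := measure_inter_add_diff (μ := volume) (closedBall x ρ) hE
          rw [diff_eq_compl_inter, inter_comm (closedBall x ρ) E] at h0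
          exact h0
        rw [this, ENNReal.div_self (measure_closedBall_pos volume x hρ).ne'
          measure_closedBall_lt_top.ne]
      have := tendsto_nhds_unique (hsum.congr' heq) tendsto_const_nhds
      norm_num at this
  rw [Filter.eventually_and] at key
  constructor
  · refine measure_mono_null (fun x hx => ?_) (ae_iff.1 key.1)
    simp only [mem_setOf_eq, Classical.not_imp]
    exact ⟨hx.1, hx.2⟩
  · refine measure_mono_null (fun x hx => ?_) (ae_iff.1 key.2)
    simp only [mem_setOf_eq, Classical.not_imp]
    exact ⟨hx.2, not_not_intro hx.1⟩

lemma notMem_densityOne_of_null {E : Set (EuclideanSpace ℝ (Fin n))}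
    {B : Set (EuclideanSpace ℝ (Fin n))} (hB : IsOpen B)
    (h0 : volume (E ∩ B) = 0) {c : EuclideanSpace ℝ (Fin n)} (hc : c ∈ B) :
    c ∉ densityOne E := by
  intro hcD
  obtain ⟨ε, hε, hεB⟩ := Metric.isOpen_iff.1 hB c hc
  have hev : ∀ᶠ ρ in 𝓝[>] (0:ℝ),
      volume (E ∩ ball c ρ) / volume (ball c ρ) = 0 := by
    filter_upwards [Ioo_mem_nhdsGT_of_mem ⟨le_refl _, hε⟩] with ρ hρ
    have : volume (E ∩ ball c ρ) = 0 :=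
      measure_mono_null (inter_subset_inter_right _ ((ball_subset_ball hρ.2.le).trans hεB)) h0
    simp [this]
  have h1 : Tendsto (fun ρ => volume (E ∩ ball c ρ) / volume (ball c ρ)) (𝓝[>] 0)
      (𝓝 0) := tendsto_const_nhds.congr' (hev.mono fun ρ h => h.symm)
  have := tendsto_nhds_unique hcD h1
  norm_num at this

lemma ball_subset_densityOne_of_null {E : Set (EuclideanSpace ℝ (Fin n))}
    (hE : MeasurableSet E) {x : EuclideanSpace ℝ (Fin n)} {r : ℝ}
    (h0 : volume (ball x r \ E) = 0) : ball x r ⊆ densityOne E := by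
  intro c hc
  obtain ⟨ε, hε, hεB⟩ := Metric.isOpen_iff.1 isOpen_ball c hc
  have hev : ∀ᶠ ρ in 𝓝[>] (0:ℝ),
      volume (E ∩ ball c ρ) / volume (ball c ρ) = 1 := by
    filter_upwards [Ioo_mem_nhdsGT_of_mem ⟨le_refl _, hε⟩] with ρ hρ
    have hsub : ball c ρ ⊆ ball x r := (ball_subset_ball hρ.2.le).trans hεB
    have hd : volume (ball c ρ \ E) = 0 :=
      measure_mono_null (diff_subset_diff_left hsub) h0
    have : volume (E ∩ ball c ρ) = volume (ball c ρ) := by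
      have h2 := measure_inter_add_diff (μ := volume) (ball c ρ) hE
      rwa [hd, add_zero, inter_comm] at h2
    rw [this, ENNReal.div_self (measure_ball_pos volume c hρ.1).ne' measure_ball_lt_top.ne]
  exact tendsto_const_nhds.congr' (hev.mono fun ρ h => h.symm)

section EssCalc

variable {E B : Set (EuclideanSpace ℝ (Fin n))}

local notation "f" => (fun y => ((E.indicator (fun _ => (1:ℝ)) y : ℝ) : EReal))

lemma f_nonneg (y : EuclideanSpace ℝ (Fin n)) : (0:EReal) ≤ f y := by
  by_cases hy : y ∈ E <;> simp [indicator_of_mem, indicator_of_notMem, hy]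

lemma f_le_one (y : EuclideanSpace ℝ (Fin n)) : f y ≤ (1:EReal) := by
  by_cases hy : y ∈ E <;> simp [indicator_of_mem, indicator_of_notMem, hy]

lemma essSup_f_eq_one (hB : MeasurableSet B) (h : volume (E ∩ B) ≠ 0) :
    essSup f (volume.restrict B) = 1 := by
  refine le_antisymm (essSup_le_of_ae_le 1 (Eventually.of_forall f_le_one)) ?_
  by_contra h'
  have hlt : essSup f (volume.restrict B) < 1 :=
    lt_of_le_of_ne (essSup_le_of_ae_le 1 (Eventually.of_forall f_le_one))
      fun hh => h' hh.ge
  have hae := ae_le_essSup (μ := volume.restrict B)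
    (isBoundedUnder_of ⟨(1:EReal), f_le_one (E := E)⟩)
  have hsub : E ⊆ {y | ¬ f y ≤ essSup f (volume.restrict B)} := by
    intro y hy
    simp only [mem_setOf_eq, indicator_of_mem hy, not_le]
    simpa [indicator_of_mem hy] using hlt
  have := measure_mono_null hsub (ae_iff.1 hae)
  rw [Measure.restrict_apply' hB] at this
  exact h this

lemma essInf_f_eq_zero (hB : MeasurableSet B) (h : volume (B \ E) ≠ 0) :
    essInf f (volume.restrict B) = 0 := by
  refine le_antisymm ?_ (le_essInf_of_ae_le 0 (Eventually.of_forall f_nonneg))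
  by_contra h'
  have hlt : (0:EReal) < essInf f (volume.restrict B) :=
    lt_of_le_of_ne (le_essInf_of_ae_le 0 (Eventually.of_forall f_nonneg))
      fun hh => h' hh.ge
  have hae := ae_essInf_le (μ := volume.restrict B)
    (isBoundedUnder_of ⟨(0:EReal), f_nonneg (E := E)⟩)
  have hsub : B \ E ⊆ {y | ¬ essInf f (volume.restrict B) ≤ f y} := by
    intro y hy
    simp only [mem_setOf_eq, indicator_of_notMem hy.2, not_le]
    simpa [indicator_of_notMem hy.2] using hlt
  have := measure_mono_null hsub (ae_iff.1 hae)
  rw [Measure.restrict_apply' hB, inter_eq_self_of_subset_left diff_subset] at this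
  exact h this

lemma f_ae_zero (hB : MeasurableSet B) (h : volume (E ∩ B) = 0) :
    f =ᵐ[volume.restrict B] (fun _ => (0:EReal)) := by
  rw [EventuallyEq, ae_iff]
  have hsub : {y | ¬ f y = 0} ⊆ E := by
    intro y hy
    by_cases hyE : y ∈ E
    · exact hyE
    · exact absurd (by simp [indicator_of_notMem hyE]) hy
  rw [Measure.restrict_apply' hB]
  exact measure_mono_null (inter_subset_inter_left _ hsub) h

lemma f_ae_one (hB : MeasurableSet B) (h : volume (B \ E) = 0) :
    f =ᵐ[volume.restrict B] (fun _ => (1:EReal)) := by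
  rw [EventuallyEq, ae_iff]
  have hsub : {y | ¬ f y = 1} ∩ B ⊆ B \ E := by
    intro y hy
    refine ⟨hy.2, fun hyE => ?_⟩
    exact hy.1 (by simp [indicator_of_mem hyE])
  rw [Measure.restrict_apply' hB]
  exact measure_mono_null hsub h

end EssCalc

lemma erealToENNReal_one : erealToENNReal 1 = 1 := by
  rw [erealToENNReal,
    if_neg (by rw [show (1:EReal) = ((1:ℝ):EReal) from rfl]; exact EReal.coe_ne_top 1),
    EReal.toReal_one, ENNReal.ofReal_one]

lemma erealToENNReal_zero : erealToENNReal 0 = 0 := by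
  rw [erealToENNReal, if_neg (by norm_num), EReal.toReal_zero, ENNReal.ofReal_zero]

lemma osc_pointwise {E : Set (EuclideanSpace ℝ (Fin n))} (hE : MeasurableSet E)
    (hED : volume (E \ densityOne E) = 0) (hDE : volume (densityOne E \ E) = 0)
    (x : EuclideanSpace ℝ (Fin n)) {r : ℝ} (hr : 0 < r) :
    osc (E.indicator (fun _ => (1 : ℝ))) (ball x r)
      = (dilate (frontier (densityOne E)) r).indicator (fun _ => (1 : ℝ≥0∞)) x := by
  set D := densityOne E with hD
  by_cases hx : x ∈ dilate (frontier D) r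
  · obtain ⟨a, haF, hax⟩ : ∃ a ∈ frontier D, x ∈ ball a r := by
      simpa [dilate] using hx
    have haF' : a ∈ closure D \ interior D := haF
    have haB : a ∈ ball x r := mem_ball'.2 (mem_ball.1 hax)
    have h1 : volume (E ∩ ball x r) ≠ 0 := by
      intro h0
      obtain ⟨c, hcB, hcD⟩ := mem_closure_iff.1 haF'.1 (ball x r) isOpen_ball haB
      exact notMem_densityOne_of_null isOpen_ball h0 hcB hcD
    have h2 : volume (ball x r \ E) ≠ 0 := by
      intro h0
      exact haF'.2 (interior_maximal (ball_subset_densityOne_of_null hE h0) isOpen_ball haB)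
    unfold osc
    rw [essSup_f_eq_one measurableSet_ball h1, essInf_f_eq_zero measurableSet_ball h2,
      indicator_of_mem hx]
    norm_num [erealToENNReal_one]
  · have hμ : volume.restrict (ball x r) ≠ 0 := by
      simp [Measure.restrict_eq_zero, (measure_ball_pos volume x hr).ne']
    have hBF : ∀ c ∈ ball x r, c ∉ frontier D := by
      intro c hc hcF
      exact hx (mem_biUnion hcF (mem_ball'.2 (mem_ball.1 hc)))
    have hsub : ball x r ⊆ interior D ∪ (closure D)ᶜ := by
      intro y hy
      by_cases h : y ∈ interior D
      · exact Or.inl h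
      · exact Or.inr fun hcl => hBF y hy ⟨hcl, h⟩
    have hdisj : Disjoint (interior D) (closure D)ᶜ :=
      disjoint_compl_right.mono_left (interior_subset.trans subset_closure)
    rcases IsPreconnected.subset_or_subset isOpen_interior isClosed_closure.isOpen_compl hdisj
        hsub (convex_ball x r).isPreconnected with hBi | hBc
    · have h0 : volume (ball x r \ E) = 0 := by
        refine measure_mono_null (fun y hy => ?_) hDE
        exact ⟨interior_subset (hBi hy.1), hy.2⟩
      have hone := f_ae_one (E := E) measurableSet_ball h0
      unfold osc
      rw [essSup_congr_ae hone, essInf_congr_ae hone, essSup_const _ hμ, essInf_const _ hμ,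
        indicator_of_notMem hx]
      rw [show ((1:EReal) - 1) = 0 by
        rw [show (1:EReal) = ((1:ℝ):EReal) from rfl, ← EReal.coe_sub]; norm_num,
        erealToENNReal_zero]
    · have h0 : volume (E ∩ ball x r) = 0 := by
        refine measure_mono_null (fun y hy => ?_) hED
        exact ⟨hy.1, fun hyD => hBc hy.2 (subset_closure hyD)⟩
      have hzero := f_ae_zero (E := E) measurableSet_ball h0
      unfold osc
      rw [essSup_congr_ae hzero, essInf_congr_ae hzero, essSup_const _ hμ, essInf_const _ hμ,
        indicator_of_notMem hx]
      rw [show ((0:EReal) - 0) = 0 by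
        rw [show (0:EReal) = ((0:ℝ):EReal) from rfl, ← EReal.coe_sub]; norm_num,
        erealToENNReal_zero]

end Helpers

/-- the oscillation of a characteristic function and the Minkowski perimeter. -/
theorem osc_indicator_eq {n : ℕ} (E : Set (EuclideanSpace ℝ (Fin n))) (hE : MeasurableSet E)
    (Ω : Set (EuclideanSpace ℝ (Fin n))) (hΩ : IsOpen Ω) (r : ℝ) (hr : 0 < r) :
    ∫⁻ x in Ω, osc (E.indicator (fun _ => (1 : ℝ))) (ball x r) =
      volume ((dilate (frontier (densityOne E)) r) ∩ Ω) := by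
  obtain ⟨hED, hDE⟩ := null_diff_densityOne hE
  have hmeas : MeasurableSet (dilate (frontier (densityOne E)) r) :=
    (isOpen_biUnion fun _ _ => isOpen_ball).measurableSet
  calc ∫⁻ x in Ω, osc (E.indicator (fun _ => (1 : ℝ))) (ball x r)
      = ∫⁻ x in Ω, (dilate (frontier (densityOne E)) r).indicator (fun _ => (1 : ℝ≥0∞)) x :=
        lintegral_congr fun x => osc_pointwise hE hED hDE x hr
    _ = 1 * (volume.restrict Ω) (dilate (frontier (densityOne E)) r) :=
        lintegral_indicator_const hmeas 1
    _ = volume ((dilate (frontier (densityOne E)) r) ∩ Ω) := by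
        rw [one_mul, Measure.restrict_apply' hΩ.measurableSet]
end

section
/- Every monotone function u ∈ L¹_loc(ℝ) is a Class A minimizer of the 1-oscillation functional E_{r,1}: for every interval (a,b) with b − a > 2r and every v ∈ L¹_loc(ℝ) coinciding with u outside (a+r, b−r), one has ∫_a^b osc_{(x−r,x+r)} u dx ≤ ∫_a^b osc_{(x−r,x+r)} v dx. -/
open MeasureTheory Metric Set Filter
open scoped ENNReal Topology

/-- Essential oscillation of `u : ℝ → ℝ` on a set `s` (possibly `+∞`). -/
noncomputable def osc1 (u : ℝ → ℝ) (s : Set ℝ) : ℝ≥0∞ :=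
  erealToENNReal ((essSup (fun x => (u x : EReal)) (volume.restrict s)) -
    (essInf (fun x => (u x : EReal)) (volume.restrict s)))

/-! For monotone `u` the oscillation on `(x - r, x + r)` is at most `u (x + r) - u (x - r)`,
whose integral over `(a, b)` telescopes to `∫_{b-r}^{b+r} u - ∫_{a-r}^{a+r} u`, a quantity that
does not see `u` on `(a + r, b - r)`. Conversely, by the Lebesgue differentiation theorem almost
every `y` is a limit of averages of `v` over intervals ending (or starting) at `y`, so
`v (x + r) - v (x - r) ≤ osc v (x - r, x + r)` for almost every `x`, and integrating this
telescopes to the same quantity for `v`. Antitone `u` reduces to the monotone case by negation. -/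

lemma ofReal_integral_le_lintegral_ofReal {α : Type*} [MeasurableSpace α] {μ : Measure α}
    (f : α → ℝ) : ENNReal.ofReal (∫ x, f x ∂μ) ≤ ∫⁻ x, ENNReal.ofReal (f x) ∂μ := by
  by_cases hf : Integrable f μ
  · refine (ENNReal.ofReal_le_ofReal ?_).trans ENNReal.ofReal_toReal_le
    rw [integral_eq_lintegral_pos_part_sub_lintegral_neg_part hf]
    exact sub_le_self _ ENNReal.toReal_nonneg
  · simp [integral_undef hf]

lemma MeasureTheory.LocallyIntegrable.intervalIntegrable {v : ℝ → ℝ} (hv : LocallyIntegrable v)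
    (a b : ℝ) : IntervalIntegrable v volume a b :=
  (hv.integrableOn_isCompact isCompact_uIcc).intervalIntegrable

lemma erealToENNReal_coe (x : ℝ) : erealToENNReal x = ENNReal.ofReal x := by
  rw [erealToENNReal, if_neg (EReal.coe_ne_top x), EReal.toReal_coe]

lemma erealToENNReal_mono : Monotone erealToENNReal := by
  intro x y h
  by_cases hy : y = ⊤
  · simp [erealToENNReal, hy]
  have hx : x ≠ ⊤ := ne_top_of_le_ne_top hy h
  rw [erealToENNReal, erealToENNReal, if_neg hx, if_neg hy]
  by_cases hxb : x = ⊥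
  · simp [hxb]
  · exact ENNReal.ofReal_le_ofReal (EReal.toReal_le_toReal h hxb hy)

lemma osc1_neg (w : ℝ → ℝ) (s : Set ℝ) : osc1 (-w) s = osc1 w s := by
  have hneg : (fun x => ((-w) x : EReal)) = -fun x => (w x : EReal) := by
    ext x; exact EReal.coe_neg _
  rw [osc1, osc1, hneg, essSup, essInf, EReal.limsup_neg, EReal.liminf_neg, sub_eq_add_neg,
    neg_neg, add_comm, ← sub_eq_add_neg, essSup, essInf]

lemma osc1_le_ofReal_sub {w : ℝ → ℝ} {s : Set ℝ} {lo hi : ℝ}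
    (hsup : essSup (fun x => (w x : EReal)) (volume.restrict s) ≤ hi)
    (hinf : (lo : EReal) ≤ essInf (fun x => (w x : EReal)) (volume.restrict s)) :
    osc1 w s ≤ ENNReal.ofReal (hi - lo) := by
  rw [← erealToENNReal_coe, EReal.coe_sub]
  exact erealToENNReal_mono (EReal.sub_le_sub hsup hinf)

lemma ofReal_sub_le_osc1 {w : ℝ → ℝ} {s : Set ℝ} {lo hi : ℝ}
    (hsup : (hi : EReal) ≤ essSup (fun x => (w x : EReal)) (volume.restrict s))
    (hinf : essInf (fun x => (w x : EReal)) (volume.restrict s) ≤ lo) :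
    ENNReal.ofReal (hi - lo) ≤ osc1 w s := by
  rw [← erealToENNReal_coe, EReal.coe_sub]
  exact erealToENNReal_mono (EReal.sub_le_sub hsup hinf)

lemma Monotone.osc1_Ioo_le {u : ℝ → ℝ} (hu : Monotone u) (c d : ℝ) :
    osc1 u (Ioo c d) ≤ ENNReal.ofReal (u d - u c) :=
  osc1_le_ofReal_sub
    (essSup_le_of_ae_le _ (ae_restrict_of_forall_mem measurableSet_Ioo
      fun _ hy => EReal.coe_le_coe (hu hy.2.le)))
    (le_essInf_of_ae_le _ (ae_restrict_of_forall_mem measurableSet_Ioo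
      fun _ hy => EReal.coe_le_coe (hu hy.1.le)))

section Primitive

variable {v : ℝ → ℝ} {b y C : ℝ}

lemma le_of_hasDerivAt_integral_of_ae_le_left {c : ℝ} (hv : LocallyIntegrable v) (hcy : c < y)
    (hd : HasDerivAt (fun t => ∫ s in b..t, v s) (v y) y)
    (hC : ∀ᵐ t ∂volume.restrict (Ioo c y), v t ≤ C) : v y ≤ C := by
  refine le_of_tendsto (hasDerivAt_iff_tendsto_slope_left_right.1 hd).1 ?_
  filter_upwards [Ioo_mem_nhdsLT hcy] with t ⟨hct, hty⟩
  have hint : ∫ s in t..y, v s ≤ C * (y - t) := by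
    rw [intervalIntegral.integral_of_le hty.le, integral_Ioc_eq_integral_Ioo]
    calc ∫ s in Ioo t y, v s ≤ ∫ _ in Ioo t y, C :=
          setIntegral_mono_ae_restrict
            ((hv.integrableOn_isCompact isCompact_Icc).mono_set Ioo_subset_Icc_self)
            (integrableOn_const (by simp))
            (ae_restrict_of_ae_restrict_of_subset (Ioo_subset_Ioo_left hct.le) hC)
      _ = C * (y - t) := by
          rw [setIntegral_const, Real.volume_real_Ioo_of_le hty.le, smul_eq_mul, mul_comm]
  rw [slope_def_field, intervalIntegral.integral_interval_sub_left (hv.intervalIntegrable b t)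
    (hv.intervalIntegrable b y), intervalIntegral.integral_symm, div_le_iff_of_neg (sub_neg.2 hty)]
  linarith

lemma ge_of_hasDerivAt_integral_of_ae_ge_right {d : ℝ} (hv : LocallyIntegrable v) (hyd : y < d)
    (hd : HasDerivAt (fun t => ∫ s in b..t, v s) (v y) y)
    (hC : ∀ᵐ t ∂volume.restrict (Ioo y d), C ≤ v t) : C ≤ v y := by
  refine ge_of_tendsto (hasDerivAt_iff_tendsto_slope_left_right.1 hd).2 ?_
  filter_upwards [Ioo_mem_nhdsGT hyd] with t ⟨hyt, htd⟩
  have hint : C * (t - y) ≤ ∫ s in y..t, v s := by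
    rw [intervalIntegral.integral_of_le hyt.le, integral_Ioc_eq_integral_Ioo]
    calc C * (t - y) = ∫ _ in Ioo y t, C := by
          rw [setIntegral_const, Real.volume_real_Ioo_of_le hyt.le, smul_eq_mul, mul_comm]
      _ ≤ ∫ s in Ioo y t, v s :=
          setIntegral_mono_ae_restrict (integrableOn_const (by simp))
            ((hv.integrableOn_isCompact isCompact_Icc).mono_set Ioo_subset_Icc_self)
            (ae_restrict_of_ae_restrict_of_subset (Ioo_subset_Ioo_right htd.le) hC)
  rw [slope_def_field, intervalIntegral.integral_interval_sub_left (hv.intervalIntegrable b t)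
    (hv.intervalIntegrable b y), le_div_iff₀ (sub_pos.2 hyt)]
  exact hint

lemma coe_le_essSup_Ioo_of_hasDerivAt {c : ℝ} (hv : LocallyIntegrable v) (hcy : c < y)
    (hd : HasDerivAt (fun t => ∫ s in b..t, v s) (v y) y) :
    (v y : EReal) ≤ essSup (fun t => (v t : EReal)) (volume.restrict (Ioo c y)) := by
  by_contra! h
  obtain ⟨C, hMC, hCv⟩ := EReal.lt_iff_exists_real_btwn.1 h
  have hvC : v y ≤ C := le_of_hasDerivAt_integral_of_ae_le_left hv hcy hd
    ((ae_lt_of_essSup_lt hMC).mono fun _ ht => (EReal.coe_lt_coe_iff.1 ht).le)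
  exact (EReal.coe_lt_coe_iff.1 hCv).not_ge hvC

lemma essInf_Ioo_le_coe_of_hasDerivAt {d : ℝ} (hv : LocallyIntegrable v) (hyd : y < d)
    (hd : HasDerivAt (fun t => ∫ s in b..t, v s) (v y) y) :
    essInf (fun t => (v t : EReal)) (volume.restrict (Ioo y d)) ≤ v y := by
  by_contra! h
  obtain ⟨C, hvC, hCm⟩ := EReal.lt_iff_exists_real_btwn.1 h
  have hCv : C ≤ v y := ge_of_hasDerivAt_integral_of_ae_ge_right hv hyd hd
    ((ae_lt_of_lt_essInf hCm).mono fun _ ht => (EReal.coe_lt_coe_iff.1 ht).le)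
  exact (EReal.coe_lt_coe_iff.1 hvC).not_ge hCv

end Primitive

lemma ae_ofReal_sub_le_osc1 {v : ℝ → ℝ} (hv : LocallyIntegrable v) {r : ℝ} (hr : 0 < r) :
    ∀ᵐ x, ENNReal.ofReal (v (x + r) - v (x - r)) ≤ osc1 v (Ioo (x - r) (x + r)) := by
  have hD := LocallyIntegrable.ae_hasDerivAt_integral hv
  filter_upwards [(measurePreserving_add_right volume r).quasiMeasurePreserving.ae hD,
    (measurePreserving_sub_right volume r).quasiMeasurePreserving.ae hD] with x hright hleft
  exact ofReal_sub_le_osc1 (coe_le_essSup_Ioo_of_hasDerivAt hv (by linarith) (hright 0))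
    (essInf_Ioo_le_coe_of_hasDerivAt hv (by linarith) (hleft 0))

section Shift

variable {w : ℝ → ℝ}

lemma intervalIntegrable_comp_add_right (hw : LocallyIntegrable w) (a b r : ℝ) :
    IntervalIntegrable (fun x => w (x + r)) volume a b := by
  simpa using (hw.intervalIntegrable (a + r) (b + r)).comp_add_right r

lemma intervalIntegrable_comp_sub_right (hw : LocallyIntegrable w) (a b r : ℝ) :
    IntervalIntegrable (fun x => w (x - r)) volume a b := by
  simpa using (hw.intervalIntegrable (a - r) (b - r)).comp_sub_right r

lemma intervalIntegrable_comp_add_sub_comp_sub (hw : LocallyIntegrable w) (a b r : ℝ) :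
    IntervalIntegrable (fun x => w (x + r) - w (x - r)) volume a b :=
  (intervalIntegrable_comp_add_right hw a b r).sub (intervalIntegrable_comp_sub_right hw a b r)

lemma integral_comp_add_sub_comp_sub (hw : LocallyIntegrable w) (a b r : ℝ) :
    ∫ x in a..b, (w (x + r) - w (x - r)) =
      (∫ x in (b - r)..(b + r), w x) - ∫ x in (a - r)..(a + r), w x := by
  rw [intervalIntegral.integral_sub (intervalIntegrable_comp_add_right hw a b r)
      (intervalIntegrable_comp_sub_right hw a b r),
    intervalIntegral.integral_comp_add_right, intervalIntegral.integral_comp_sub_right,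
    ← intervalIntegral.integral_add_adjacent_intervals (hw.intervalIntegrable (a + r) (b - r))
      (hw.intervalIntegrable (b - r) (b + r)),
    ← intervalIntegral.integral_add_adjacent_intervals (hw.intervalIntegrable (a - r) (a + r))
      (hw.intervalIntegrable (a + r) (b - r))]
  ring

end Shift

lemma integral_comp_add_sub_comp_sub_congr {u v : ℝ → ℝ} (hu : LocallyIntegrable u)
    (hv : LocallyIntegrable v) {a b r : ℝ} (hr : 0 ≤ r)
    (hvu : ∀ x, x ∉ Ioo (a + r) (b - r) → v x = u x) :
    ∫ x in a..b, (v (x + r) - v (x - r)) = ∫ x in a..b, (u (x + r) - u (x - r)) := by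
  rw [integral_comp_add_sub_comp_sub hu, integral_comp_add_sub_comp_sub hv]
  congr 1 <;> refine intervalIntegral.integral_congr fun x hx => ?_ <;>
    rw [uIcc_of_le (by linarith)] at hx <;>
    exact hvu x fun h => by linarith [h.1, h.2, hx.1, hx.2]

lemma lintegral_osc1_le_of_monotone {u v : ℝ → ℝ} (hu : LocallyIntegrable u) (hmon : Monotone u)
    (hv : LocallyIntegrable v) {a b r : ℝ} (hr : 0 < r) (hab : a ≤ b)
    (hvu : ∀ x, x ∉ Ioo (a + r) (b - r) → v x = u x) :
    ∫⁻ x in Ioo a b, osc1 u (Ioo (x - r) (x + r)) ≤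
      ∫⁻ x in Ioo a b, osc1 v (Ioo (x - r) (x + r)) := by
  have hIoo (w : ℝ → ℝ) : ∫ x in a..b, w x = ∫ x in Ioo a b, w x := by
    rw [intervalIntegral.integral_of_le hab, integral_Ioc_eq_integral_Ioo]
  have hint : IntegrableOn (fun x => u (x + r) - u (x - r)) (Ioo a b) :=
    (intervalIntegrable_iff_integrableOn_Ioo_of_le hab).1
      (intervalIntegrable_comp_add_sub_comp_sub hu a b r)
  calc ∫⁻ x in Ioo a b, osc1 u (Ioo (x - r) (x + r))
      ≤ ∫⁻ x in Ioo a b, ENNReal.ofReal (u (x + r) - u (x - r)) :=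
        lintegral_mono fun x => hmon.osc1_Ioo_le _ _
    _ = ENNReal.ofReal (∫ x in a..b, (u (x + r) - u (x - r))) := by
        rw [hIoo, ofReal_integral_eq_lintegral_ofReal hint
          (ae_of_all _ fun x => sub_nonneg.2 (hmon (by linarith)))]
    _ = ENNReal.ofReal (∫ x in a..b, (v (x + r) - v (x - r))) := by
        rw [integral_comp_add_sub_comp_sub_congr hu hv hr.le hvu]
    _ ≤ ∫⁻ x in Ioo a b, ENNReal.ofReal (v (x + r) - v (x - r)) := by
        rw [hIoo]; exact ofReal_integral_le_lintegral_ofReal _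
    _ ≤ ∫⁻ x in Ioo a b, osc1 v (Ioo (x - r) (x + r)) :=
        lintegral_mono_ae (ae_restrict_of_ae (ae_ofReal_sub_le_osc1 hv hr))

/-- every monotone function is a Class A minimizer for `E_{r,1}`. -/
theorem monotone_classA_p1 (u : ℝ → ℝ) (hu : LocallyIntegrable u)
    (hmon : Monotone u ∨ Antitone u) (r : ℝ) (hr : 0 < r) :
    ∀ a b : ℝ, b - a > 2 * r → ∀ v : ℝ → ℝ, LocallyIntegrable v →
      (∀ x, x ∉ Ioo (a + r) (b - r) → v x = u x) →
      ∫⁻ x in Ioo a b, osc1 u (Ioo (x - r) (x + r)) ≤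
        ∫⁻ x in Ioo a b, osc1 v (Ioo (x - r) (x + r)) := by
  intro a b hab v hv hvu
  have hab' : a ≤ b := by linarith
  rcases hmon with hmon | hanti
  · exact lintegral_osc1_le_of_monotone hu hmon hv hr hab' hvu
  · simpa only [osc1_neg] using lintegral_osc1_le_of_monotone hu.neg hanti.neg hv.neg hr hab'
      fun x hx => congrArg Neg.neg (hvu x hx)
end

section
/- Let u : ℝ → ℝ be strictly increasing and satisfy u(x + 2r) − u(x) = u(x) − u(x − 2r) for a.e. x ∈ ℝ. Then the function C(x) := u(x) − u(x − 2r) is a.e. equal to a positive constant C, and φ(x) := u(x) − (C/2r)x is 2r-periodic. -/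
open MeasureTheory Set Filter
open scoped ENNReal Topology

private lemma nat_mul_le_imp (a b : ℝ) (h : ∀ n : ℕ, (n : ℝ) * a ≤ b) : a ≤ 0 := by
  by_contra hc
  push_neg at hc
  obtain ⟨n, hn⟩ := exists_nat_gt (b / a)
  have h1 := h n
  have h2 : b / a * a < (n : ℝ) * a := by exact mul_lt_mul_of_pos_right hn hc
  rw [div_mul_cancel₀ b (ne_of_gt hc)] at h2
  linarith

private lemma key_formula (r : ℝ) (u : ℝ → ℝ) (x : ℝ)
    (q : ∀ n : ℕ, u (x + 2*r*n + 2*r) - u (x + 2*r*n)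
      = u (x + 2*r*n) - u (x + 2*r*n - 2*r)) :
    ∀ n : ℕ, u (x + 2*r*n) = u x + n * (u x - u (x - 2*r)) := by
  have step : ∀ n : ℕ, u (x + 2*r*n + 2*r) - u (x + 2*r*n) = u x - u (x - 2*r) := by
    intro n
    induction n with
    | zero =>
      have h0 := q 0
      simp only [Nat.cast_zero, mul_zero, add_zero] at h0 ⊢
      exact h0
    | succ k ih =>
      have hq := q (k+1)
      have e2 : x + 2*r*((k:ℝ)+1) - 2*r = x + 2*r*(k:ℝ) := by ring
      have e3 : x + 2*r*((k:ℝ)+1) = x + 2*r*(k:ℝ) + 2*r := by ring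
      push_cast at hq ⊢
      rw [e2, e3] at hq
      rw [e3]
      linarith
  intro n
  induction n with
  | zero => simp
  | succ k ih =>
    have hs := step k
    have e3 : x + 2*r*((k:ℝ)+1) = x + 2*r*(k:ℝ) + 2*r := by ring
    push_cast
    rw [e3]
    push_cast at ih
    linarith

/-- a strictly increasing function whose second differences at scale `2r`
vanish a.e. has a.e. constant increment `C > 0` over intervals of length `2r`, and
`φ(x) := u(x) − (C/2r)x` is `2r`-periodic (a.e.). -/
theorem increment_constant_of_midpoint (r : ℝ) (hr : 0 < r) (u : ℝ → ℝ)
    (hmeas : Measurable u) (hmono : StrictMono u) (hloc : LocallyIntegrable u)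
    (h : ∀ᵐ x : ℝ, u (x + 2 * r) - u x = u x - u (x - 2 * r)) :
    ∃ C : ℝ, 0 < C ∧ (∀ᵐ x : ℝ, u x - u (x - 2 * r) = C) ∧
      (∀ᵐ x : ℝ, u (x + 2 * r) - (C / (2 * r)) * (x + 2 * r) = u x - (C / (2 * r)) * x) := by
  have h2r : (0:ℝ) < 2*r := by linarith
  -- translation of the a.e. hypothesis
  have hshift : ∀ c : ℝ, ∀ᵐ x : ℝ,
      u (x + c + 2*r) - u (x + c) = u (x + c) - u (x + c - 2*r) := by
    intro c
    have hmp := (measurePreserving_add_right (volume : Measure ℝ) c).quasiMeasurePreserving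
    exact hmp.ae h
  have hS : ∀ᵐ x : ℝ, ∀ n : ℕ, u (x + 2*r*n + 2*r) - u (x + 2*r*n)
      = u (x + 2*r*n) - u (x + 2*r*n - 2*r) := by
    rw [ae_all_iff]
    intro n
    exact hshift (2*r*n)
  set G : ℝ → Prop := fun x => ∀ n : ℕ, u (x + 2*r*n + 2*r) - u (x + 2*r*n)
      = u (x + 2*r*n) - u (x + 2*r*n - 2*r) with hG
  -- constancy of the increment on G
  have aux : ∀ x y : ℝ, x ≤ y → G x → G y →
      u x - u (x - 2*r) = u y - u (y - 2*r) := by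
    intro x y hxy hgx hgy
    have fx := key_formula r u x hgx
    have fy := key_formula r u y hgy
    obtain ⟨m, hm⟩ := exists_nat_ge ((y - x) / (2*r))
    have hym : y ≤ x + 2*r*m := by
      have := (div_le_iff₀ h2r).mp hm
      linarith
    have ineq1 : u x - u (x - 2*r) ≤ u y - u (y - 2*r) := by
      have : ∀ n : ℕ, (n : ℝ) * ((u x - u (x - 2*r)) - (u y - u (y - 2*r))) ≤ u y - u x := by
        intro n
        have hle : x + 2*r*n ≤ y + 2*r*n := by linarith
        have := hmono.monotone hle
        rw [fx n, fy n] at this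
        linarith
      have := nat_mul_le_imp _ _ this
      linarith
    have ineq2 : u y - u (y - 2*r) ≤ u x - u (x - 2*r) := by
      have : ∀ n : ℕ, (n : ℝ) * ((u y - u (y - 2*r)) - (u x - u (x - 2*r)))
          ≤ u x + m * (u x - u (x - 2*r)) - u y := by
        intro n
        have hle : y + 2*r*n ≤ x + 2*r*((n + m : ℕ) : ℝ) := by
          push_cast
          linarith
        have hmo := hmono.monotone hle
        rw [fy n, fx (n + m)] at hmo
        push_cast at hmo
        nlinarith
      have := nat_mul_le_imp _ _ this
      linarith
    linarith
  have hconst : ∀ x y : ℝ, G x → G y →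
      u x - u (x - 2*r) = u y - u (y - 2*r) := by
    intro x y hgx hgy
    rcases le_total x y with hxy | hxy
    · exact aux x y hxy hgx hgy
    · exact (aux y x hxy hgy hgx).symm
  obtain ⟨x0, hx0⟩ := hS.exists
  refine ⟨u x0 - u (x0 - 2*r), ?_, ?_, ?_⟩
  · have : u (x0 - 2*r) < u x0 := hmono (by linarith)
    linarith
  · filter_upwards [hS] with x hx
    have := hconst x x0 hx hx0
    convert this using 4 <;> ring
  · filter_upwards [hS] with x hx
    have h0 := hx 0
    simp only [Nat.cast_zero, mul_zero, add_zero] at h0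
    -- h0 : u (x + 2*r) - u x = u x - u (x - 2*r)
    have hc : u x - u (x - 2*r) = u x0 - u (x0 - 2*r) := hconst x x0 hx hx0
    have hcancel : (u x0 - u (x0 - 2*r)) / (2*r) * (2*r) = u x0 - u (x0 - 2*r) :=
      div_mul_cancel₀ _ (ne_of_gt h2r)
    have e2 : u (x + 2*r) - u x = u x0 - u (x0 - 2*r) := by linarith
    have expand : (u x0 - u (x0 - 2*r)) / (2*r) * (x + 2*r)
        = (u x0 - u (x0 - 2*r)) / (2*r) * x + (u x0 - u (x0 - 2*r)) / (2*r) * (2*r) := by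
      ring
    rw [expand, hcancel]
    linarith
end
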